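/- For k = 2 and a = 2, the number of lattice paths from (0,0) to the x-axis of height less than 2 (using NE, SE, N, E steps, E only at height 0) with major index n equals the number of overpartitions of n into parts satisfying λ_j − λ_{j+1} ≥ 1 if λ_j is overlined and ≥ 2 otherwise, with 1 occurring non-overlined at most once. -/

import Mathlib

/-- The four kinds of unitary steps: North-East, South-East, North, East. -/
inductive Step : Type
  | NE | SE | N | E
deriving DecidableEq, Repr

/-- Horizontal displacement of a step. -/
def stepDx : Step → ℕ
  | Step.N => 0
  | _ => 1

/-- Vertical displacement of a step. -/
def stepDy : Step → ℤ
  | Step.NE => 1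
  | Step.N => 1
  | Step.SE => -1
  | Step.E => 0

/-- The x-coordinate (weight) of the j-th vertex of the path. -/
def xCoord (l : List Step) (j : ℕ) : ℕ := ((l.take j).map stepDx).sum

/-- The y-coordinate (height) of the j-th vertex, for a path starting at (0, k−a). -/
def yCoord (k a : ℕ) (l : List Step) (j : ℕ) : ℤ :=
  ((k : ℤ) - (a : ℤ)) + ((l.take j).map stepDy).sum

/-- Vertex j is a peak: preceded by an NE step (NESE peak) or an N step (NSE peak)
and followed by an SE step. -/
def isPeakB (l : List Step) (j : ℕ) : Bool :=
  decide (1 ≤ j) && decide (j < l.length) &&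
    (decide (l.getD (j - 1) Step.E = Step.NE) || decide (l.getD (j - 1) Step.E = Step.N)) &&
    decide (l.getD j Step.E = Step.SE)

/-- The major index of a path: the sum of the weights of its peaks. -/
def majorIndex (l : List Step) : ℕ :=
  ∑ j ∈ Finset.range (l.length + 1), if isPeakB l j then xCoord l j else 0

/-- A lattice path satisfying the special (k,a)-conditions: it starts at (0, k−a) on the
y-axis, stays in the first quadrant with height < k, East steps occur only at height 0,
it ends on the x-axis, it is empty or ends with an SE step, and if the leftmost peak is
an NSE peak then the path starts with an NE step, except when it starts at (0,0) with an
E step. -/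
def ValidPath (k a : ℕ) (l : List Step) : Prop :=
  (∀ j ≤ l.length, 0 ≤ yCoord k a l j ∧ yCoord k a l j < (k : ℤ)) ∧
  (∀ j < l.length, l.getD j Step.E = Step.E → yCoord k a l j = 0) ∧
  yCoord k a l l.length = 0 ∧
  (l = [] ∨ l.getLast? = some Step.SE) ∧
  (∀ j, isPeakB l j = true → (∀ i < j, isPeakB l i = false) →
    l.getD (j - 1) Step.E = Step.N →
    (l.getD 0 Step.E = Step.NE ∨ (a = k ∧ l.getD 0 Step.E = Step.E)))

/-- The peak at vertex j has relative height at least h: there are two vertices of the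
path at height y − h, one with abscissa ≤ x and one with abscissa > x, such that between
them there is no peak of height > y and every peak of height y has abscissa ≥ x. -/
def RelHeightGe (k a : ℕ) (l : List Step) (j h : ℕ) : Prop :=
  ∃ j₁ j₂, j₁ ≤ l.length ∧ j₂ ≤ l.length ∧
    xCoord l j₁ ≤ xCoord l j ∧ xCoord l j < xCoord l j₂ ∧
    yCoord k a l j₁ = yCoord k a l j - h ∧ yCoord k a l j₂ = yCoord k a l j - h ∧
    ∀ i, j₁ ≤ i → i ≤ j₂ → isPeakB l i = true →
      yCoord k a l i ≤ yCoord k a l j ∧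
        (yCoord k a l i = yCoord k a l j → xCoord l j ≤ xCoord l i)

/-- The relative height of the peak at vertex j: the largest h with `RelHeightGe`. -/
noncomputable def relHeight (k a : ℕ) (l : List Step) (j : ℕ) : ℕ :=
  sSup {h : ℕ | RelHeightGe k a l j h}

/-- The number of peaks of relative height ≥ r. -/
noncomputable def peakCountGe (k a : ℕ) (l : List Step) (r : ℕ) : ℕ :=
  Nat.card {j : ℕ // isPeakB l j = true ∧ r ≤ relHeight k a l j}

/-- W(x): the number of NSE peaks of weight ≤ x. -/
noncomputable def Wcount (l : List Step) (x : ℕ) : ℕ :=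
  Nat.card {j : ℕ // isPeakB l j = true ∧ l.getD (j - 1) Step.E = Step.N ∧ xCoord l j ≤ x}

/-- The leftmost peak of the path is an NSE peak. -/
def leftmostNSE (l : List Step) : Prop :=
  ∃ j, isPeakB l j = true ∧ (∀ i < j, isPeakB l i = false) ∧
    l.getD (j - 1) Step.E = Step.N

/-- The leftmost peak of the path is an NESE peak. -/
def leftmostNESE (l : List Step) : Prop :=
  ∃ j, isPeakB l j = true ∧ (∀ i < j, isPeakB l i = false) ∧
    l.getD (j - 1) Step.E = Step.NE

/-- The peak at vertex j has even parity: x − r − W(x) is odd, where r is the relative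
height and x the weight. -/
noncomputable def evenPeak (k a : ℕ) (l : List Step) (j : ℕ) : Prop :=
  Odd ((xCoord l j : ℤ) - (relHeight k a l j : ℤ) - (Wcount l (xCoord l j) : ℤ))

/-- The peak at vertex j has odd parity: x − r − W(x) is even. -/
noncomputable def oddPeak (k a : ℕ) (l : List Step) (j : ℕ) : Prop :=
  Even ((xCoord l j : ℤ) - (relHeight k a l j : ℤ) - (Wcount l (xCoord l j) : ℤ))

/-- An overpartition, modeled as a non-increasing list of pairs (part, overlined?),
with positive parts, where each part size is overlined at most once. -/
def IsOverpartition (l : List (ℕ × Bool)) : Prop :=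
  l.Pairwise (fun p q => q.1 ≤ p.1) ∧ (∀ p ∈ l, 0 < p.1) ∧
    ∀ m : ℕ, (l.filter (fun p => decide (p.1 = m) && p.2)).length ≤ 1

/-- The number partitioned by an overpartition. -/
def opSum (l : List (ℕ × Bool)) : ℕ := (l.map Prod.fst).sum

/-- The Rogers–Ramanujan–Gordon type condition counted by B̄_{k,a}(n):
1 occurs as a non-overlined part at most a−1 times, and
λ_j − λ_{j+k−1} ≥ 1 if λ_j is overlined, ≥ 2 otherwise. -/
def BarBCond (k a : ℕ) (l : List (ℕ × Bool)) : Prop :=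
  IsOverpartition l ∧
  (l.filter (fun p => decide (p.1 = 1) && !p.2)).length ≤ a - 1 ∧
  ∀ j, j + (k - 1) < l.length →
    ((l.getD j (0, false)).2 = true →
      (l.getD (j + (k - 1)) (0, false)).1 + 1 ≤ (l.getD j (0, false)).1) ∧
    ((l.getD j (0, false)).2 = false →
      (l.getD (j + (k - 1)) (0, false)).1 + 2 ≤ (l.getD j (0, false)).1)

/-- The number of overpartitions of n counted by B̄_{k,a}(n). -/
noncomputable def BarB (k a n : ℕ) : ℕ :=
  Nat.card {l : List (ℕ × Bool) // BarBCond k a l ∧ opSum l = n}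

namespace RRG

lemma yCoord_zero (k a : ℕ) (l : List Step) : yCoord k a l 0 = (k:ℤ) - a := by
  simp [yCoord]

lemma yCoord_cons (k a : ℕ) (s : Step) (l : List Step) (j : ℕ) :
    yCoord k a (s :: l) (j+1) = stepDy s + yCoord k a l j := by
  simp [yCoord]; ring

lemma xCoord_zero (l : List Step) : xCoord l 0 = 0 := by simp [xCoord]

lemma xCoord_cons (s : Step) (l : List Step) (j : ℕ) :
    xCoord (s :: l) (j+1) = stepDx s + xCoord l j := by simp [xCoord]

lemma isPeakB_zero (l : List Step) : isPeakB l 0 = false := by simp [isPeakB]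

lemma isPeakB_cons_E (l : List Step) (j : ℕ) :
    isPeakB (Step.E :: l) (j+1) = isPeakB l j := by
  cases j with
  | zero => simp [isPeakB]
  | succ j => simp [isPeakB, Nat.succ_lt_succ_iff]

lemma isPeakB_cons2 (s : Step) (l : List Step) (j : ℕ) :
    isPeakB (s :: Step.SE :: l) (j+1+1) = isPeakB l j := by
  cases j with
  | zero => simp [isPeakB]
  | succ j => simp [isPeakB, Nat.succ_lt_succ_iff]

lemma isPeakB_one_NE (l : List Step) :
    isPeakB (Step.NE :: Step.SE :: l) 1 = true := by simp [isPeakB]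

lemma isPeakB_one_N (l : List Step) :
    isPeakB (Step.N :: Step.SE :: l) 1 = true := by simp [isPeakB]

end RRG
namespace RRG

/-- Major index with an x-offset `c`. -/
def maj (c : ℕ) (l : List Step) : ℕ :=
  ∑ j ∈ Finset.range (l.length + 1), if isPeakB l j then c + xCoord l j else 0

lemma maj_zero_eq (l : List Step) : maj 0 l = majorIndex l := by
  unfold maj majorIndex
  simp

lemma maj_nil (c : ℕ) : maj c [] = 0 := by simp [maj, isPeakB_zero]

lemma maj_cons_E (c : ℕ) (l : List Step) : maj c (Step.E :: l) = maj (c+1) l := by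
  unfold maj
  rw [show (Step.E :: l).length + 1 = (l.length + 1) + 1 from rfl, Finset.sum_range_succ']
  simp only [isPeakB_zero, isPeakB_cons_E, xCoord_cons, Bool.false_eq_true, if_false, add_zero]
  refine Finset.sum_congr rfl fun j _ => ?_
  by_cases h : isPeakB l j = true
  · rw [if_pos h, if_pos h]
    show c + (1 + xCoord l j) = c + 1 + xCoord l j
    omega
  · rw [if_neg h, if_neg h]

lemma maj_cons2 (s : Step) (c : ℕ) (l : List Step) :
    maj c (s :: Step.SE :: l) =
      (if isPeakB (s :: Step.SE :: l) 1 then c + stepDx s else 0) +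
        maj (c + stepDx s + 1) l := by
  unfold maj
  rw [show (s :: Step.SE :: l).length + 1 = ((l.length + 1) + 1) + 1 from rfl,
    Finset.sum_range_succ', Finset.sum_range_succ']
  simp only [isPeakB_zero, isPeakB_cons2, zero_add, Bool.false_eq_true, if_false, add_zero]
  have hx : xCoord (s :: Step.SE :: l) 1 = stepDx s := by
    rw [show (1:ℕ) = 0 + 1 from rfl, xCoord_cons, xCoord_zero, add_zero]
  rw [hx, add_comm]
  congr 1
  refine Finset.sum_congr rfl fun j _ => ?_
  by_cases h : isPeakB l j = true
  · rw [if_pos h, if_pos h]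
    rw [show j + 1 + 1 = (j + 1) + 1 from rfl, xCoord_cons, xCoord_cons]
    show c + (stepDx s + (1 + xCoord l j)) = c + stepDx s + 1 + xCoord l j
    omega
  · rw [if_neg h, if_neg h]

lemma maj_cons_NESE (c : ℕ) (l : List Step) :
    maj c (Step.NE :: Step.SE :: l) = (c + 1) + maj (c + 2) l := by
  rw [maj_cons2, isPeakB_one_NE]
  simp [stepDx]

lemma maj_cons_NSE (c : ℕ) (l : List Step) :
    maj c (Step.N :: Step.SE :: l) = c + maj (c + 1) l := by
  rw [maj_cons2, isPeakB_one_N]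
  simp [stepDx]

lemma maj_replicate (d c : ℕ) (l : List Step) :
    maj c (List.replicate d Step.E ++ l) = maj (c + d) l := by
  induction d generalizing c with
  | zero => simp
  | succ d ih =>
      rw [List.replicate_succ, List.cons_append, maj_cons_E, ih]
      congr 1; omega

end RRG
namespace RRG

/-- Build a path from an increasing list of (peak x, is-NSE) starting at x = cur. -/
def g : ℕ → List (ℕ × Bool) → List Step
  | _, [] => []
  | cur, (p, true) :: rest =>
      List.replicate (p - cur) Step.E ++ Step.N :: Step.SE :: g (p+1) rest
  | cur, (p, false) :: rest =>
      List.replicate (p - 1 - cur) Step.E ++ Step.NE :: Step.SE :: g (p+1) rest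

/-- Decode a path into its peak list. -/
def dec : List Step → ℕ → List (ℕ × Bool)
  | [], _ => []
  | Step.E :: l, c => dec l (c+1)
  | Step.N :: _ :: l, c => (c, true) :: dec l (c+1)
  | Step.NE :: _ :: l, c => (c+1, false) :: dec l (c+2)
  | _, _ => []

/-- Validity of an increasing peak list with current position `cur`. -/
def SpecAt : ℕ → List (ℕ × Bool) → Prop
  | _, [] => True
  | cur, p :: rest =>
      (if p.2 then max cur 1 ≤ p.1 else cur + 1 ≤ p.1) ∧ SpecAt (p.1 + 1) rest

def partSum (m : List (ℕ × Bool)) : ℕ := (m.map Prod.fst).sum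

lemma dec_replicate (d : ℕ) (l : List Step) (c : ℕ) :
    dec (List.replicate d Step.E ++ l) c = dec l (c + d) := by
  induction d generalizing c with
  | zero => simp
  | succ d ih =>
      rw [List.replicate_succ, List.cons_append]
      show dec _ (c+1) = _
      rw [ih]; congr 1; omega

lemma dec_g (m : List (ℕ × Bool)) : ∀ cur, SpecAt cur m → dec (g cur m) cur = m := by
  induction m with
  | nil => intro cur _; rfl
  | cons p rest ih =>
      intro cur hs
      obtain ⟨⟨q, b⟩, rfl⟩ : ∃ q : ℕ × Bool, q = p := ⟨p, rfl⟩
      obtain ⟨h1, h2⟩ := hs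
      cases b with
      | true =>
          have h1' : max cur 1 ≤ q := by simpa using h1
          have hq : cur ≤ q ∧ 1 ≤ q := by
            constructor
            · exact le_trans (le_max_left _ _) h1'
            · exact le_trans (le_max_right _ _) h1'
          show dec (List.replicate (q - cur) Step.E ++ _) cur = _
          rw [dec_replicate]
          rw [show cur + (q - cur) = q by omega]
          show (q, true) :: dec (g (q+1) rest) (q+1) = _
          rw [ih (q+1) h2]
      | false =>
          have h1' : cur + 1 ≤ q := by simpa using h1
          show dec (List.replicate (q - 1 - cur) Step.E ++ _) cur = _
          rw [dec_replicate]
          rw [show cur + (q - 1 - cur) = q - 1 by omega]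
          show (q - 1 + 1, false) :: dec (g (q+1) rest) (q - 1 + 2) = _
          rw [show q - 1 + 2 = q + 1 by omega, ih (q+1) h2, show q - 1 + 1 = q by omega]

lemma g_ne_nil (cur : ℕ) (p : ℕ × Bool) (rest : List (ℕ × Bool)) :
    g cur (p :: rest) ≠ [] := by
  obtain ⟨q, b⟩ := p
  cases b <;> simp [g]

lemma maj_g (m : List (ℕ × Bool)) : ∀ cur, SpecAt cur m → maj cur (g cur m) = partSum m := by
  induction m with
  | nil => intro cur _; simp [g, maj_nil, partSum]
  | cons p rest ih =>
      intro cur hs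
      obtain ⟨q, b⟩ := p
      obtain ⟨h1, h2⟩ := hs
      cases b with
      | true =>
          have h1' : max cur 1 ≤ q := by simpa using h1
          have hq : cur ≤ q := le_trans (le_max_left _ _) h1'
          show maj cur (List.replicate (q - cur) Step.E ++ _) = _
          rw [maj_replicate]
          rw [show cur + (q - cur) = q by omega, maj_cons_NSE, ih (q+1) h2]
          simp [partSum]
      | false =>
          have h1' : cur + 1 ≤ q := by simpa using h1
          show maj cur (List.replicate (q - 1 - cur) Step.E ++ _) = _
          rw [maj_replicate]
          rw [show cur + (q - 1 - cur) = q - 1 by omega, maj_cons_NESE,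
            show q - 1 + 2 = q + 1 by omega, ih (q+1) h2]
          simp only [partSum, List.map_cons, List.sum_cons]
          omega

end RRG
namespace RRG

/-- Grammar for paths of height < 2: tokens E / NE·SE / N·SE, ending with a peak. -/
inductive Gr2 : List Step → Prop
  | nil : Gr2 []
  | consE {l} : Gr2 l → l ≠ [] → Gr2 (Step.E :: l)
  | consNESE {l} : Gr2 l → Gr2 (Step.NE :: Step.SE :: l)
  | consNSE {l} : Gr2 l → Gr2 (Step.N :: Step.SE :: l)

def VP' (l : List Step) : Prop :=
  (∀ j ≤ l.length, 0 ≤ yCoord 2 2 l j ∧ yCoord 2 2 l j < (2:ℤ)) ∧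
  (∀ j < l.length, l.getD j Step.E = Step.E → yCoord 2 2 l j = 0) ∧
  yCoord 2 2 l l.length = 0 ∧
  (l = [] ∨ l.getLast? = some Step.SE)

lemma getLast?_cons_of_ne_nil {α : Type*} (a : α) {l : List α} (h : l ≠ []) :
    (a :: l).getLast? = l.getLast? := by
  cases l with
  | nil => exact absurd rfl h
  | cons b t => exact List.getLast?_cons_cons

lemma gr2_vp' {l : List Step} (h : Gr2 l) : VP' l := by
  induction h with
  | nil =>
      refine ⟨?_, ?_, ?_, Or.inl rfl⟩
      · intro j hj
        have : j = 0 := by simpa using hj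
        subst this
        norm_num [yCoord]
      · intro j hj; simp at hj
      · norm_num [yCoord]
  | @consE l hl hne ih =>
      obtain ⟨ih1, ih2, ih3, ih4⟩ := ih
      refine ⟨?_, ?_, ?_, Or.inr ?_⟩
      · intro j hj
        cases j with
        | zero => simp [yCoord_zero]
        | succ j =>
            rw [yCoord_cons]
            have := ih1 j (by simpa using hj)
            simp [stepDy]; constructor <;> [exact this.1; linarith [this.2]]
      · intro j hj he
        cases j with
        | zero => simp [yCoord_zero]
        | succ j =>
            rw [yCoord_cons]
            have := ih2 j (by simpa using hj) (by simpa using he)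
            simp [stepDy, this]
      · show yCoord 2 2 _ (l.length + 1) = 0
        rw [yCoord_cons, ih3]; simp [stepDy]
      · rw [getLast?_cons_of_ne_nil _ hne]
        rcases ih4 with h | h
        · exact absurd h hne
        · exact h
  | @consNESE l hl ih =>
      obtain ⟨ih1, ih2, ih3, ih4⟩ := ih
      have y1 : yCoord 2 2 (Step.NE :: Step.SE :: l) 1 = 1 := by
        rw [show (1:ℕ) = 0 + 1 from rfl, yCoord_cons, yCoord_zero]; simp [stepDy]
      refine ⟨?_, ?_, ?_, Or.inr ?_⟩
      · intro j hj
        match j with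
        | 0 => simp [yCoord_zero]
        | 1 => rw [y1]; norm_num
        | (j+2) =>
            rw [yCoord_cons, yCoord_cons]
            have := ih1 j (by simpa using hj)
            simp [stepDy]
            constructor <;> [linarith [this.1]; linarith [this.2]]
      · intro j hj he
        match j with
        | 0 => simp at he
        | 1 => simp at he
        | (j+2) =>
            rw [yCoord_cons, yCoord_cons]
            have := ih2 j (by simpa using hj) (by simpa using he)
            simp [stepDy, this]
      · show yCoord 2 2 _ (l.length + 1 + 1) = 0
        rw [yCoord_cons, yCoord_cons, ih3]; simp [stepDy]
      · rcases ih4 with h | h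
        · subst h; rfl
        · have hne : l ≠ [] := by intro h'; subst h'; simp at h
          rw [getLast?_cons_of_ne_nil _ (by simp), getLast?_cons_of_ne_nil _ hne]
          exact h
  | @consNSE l hl ih =>
      obtain ⟨ih1, ih2, ih3, ih4⟩ := ih
      have y1 : yCoord 2 2 (Step.N :: Step.SE :: l) 1 = 1 := by
        rw [show (1:ℕ) = 0 + 1 from rfl, yCoord_cons, yCoord_zero]; simp [stepDy]
      refine ⟨?_, ?_, ?_, Or.inr ?_⟩
      · intro j hj
        match j with
        | 0 => simp [yCoord_zero]
        | 1 => rw [y1]; norm_num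
        | (j+2) =>
            rw [yCoord_cons, yCoord_cons]
            have := ih1 j (by simpa using hj)
            simp [stepDy]
            constructor <;> [linarith [this.1]; linarith [this.2]]
      · intro j hj he
        match j with
        | 0 => simp at he
        | 1 => simp at he
        | (j+2) =>
            rw [yCoord_cons, yCoord_cons]
            have := ih2 j (by simpa using hj) (by simpa using he)
            simp [stepDy, this]
      · show yCoord 2 2 _ (l.length + 1 + 1) = 0
        rw [yCoord_cons, yCoord_cons, ih3]; simp [stepDy]
      · rcases ih4 with h | h
        · subst h; rfl
        · have hne : l ≠ [] := by intro h'; subst h'; simp at h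
          rw [getLast?_cons_of_ne_nil _ (by simp), getLast?_cons_of_ne_nil _ hne]
          exact h

end RRG
namespace RRG

lemma y0_22 (l : List Step) : yCoord 2 2 l 0 = 0 := by simp [yCoord]

lemma vp'_tail_E {t : List Step} (h : VP' (Step.E :: t)) (hne : t ≠ []) : VP' t := by
  obtain ⟨h1, h2, h3, h4⟩ := h
  refine ⟨?_, ?_, ?_, Or.inr ?_⟩
  · intro j hj
    have := h1 (j+1) (by simpa using hj)
    rwa [yCoord_cons, show stepDy Step.E = 0 from rfl, zero_add] at this
  · intro j hj he
    have := h2 (j+1) (by simpa using hj) (by simpa using he)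
    rwa [yCoord_cons, show stepDy Step.E = 0 from rfl, zero_add] at this
  · have := h3
    rw [show (Step.E :: t).length = t.length + 1 from rfl, yCoord_cons,
      show stepDy Step.E = 0 from rfl, zero_add] at this
    exact this
  · rcases h4 with h | h
    · simp at h
    · rwa [getLast?_cons_of_ne_nil _ hne] at h

lemma vp'_tail2 {s : Step} {u : List Step} (hs : stepDy s = 1)
    (h : VP' (s :: Step.SE :: u)) : VP' u := by
  obtain ⟨h1, h2, h3, h4⟩ := h
  have hy : ∀ j, yCoord 2 2 (s :: Step.SE :: u) (j + 2) = yCoord 2 2 u j := by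
    intro j
    rw [show j + 2 = (j+1) + 1 from rfl, yCoord_cons, yCoord_cons, hs,
      show stepDy Step.SE = -1 from rfl]
    ring
  refine ⟨?_, ?_, ?_, ?_⟩
  · intro j hj
    have := h1 (j+2) (by simp; omega)
    rwa [hy] at this
  · intro j hj he
    have := h2 (j+2) (by simp; omega) (by simpa using he)
    rwa [hy] at this
  · have := h3
    rw [show (s :: Step.SE :: u).length = u.length + 2 from rfl, hy] at this
    exact this
  · rcases h4 with h | h
    · simp at h
    · cases u with
      | nil => exact Or.inl rfl
      | cons b t =>
          right
          rwa [getLast?_cons_of_ne_nil _ (by simp), getLast?_cons_of_ne_nil _ (by simp)] at h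

lemma vp'_gr2 : ∀ l : List Step, VP' l → Gr2 l
  | [], _ => Gr2.nil
  | Step.SE :: t, h => by
      exfalso
      have := (h.1 1 (by simp)).1
      rw [show (1:ℕ) = 0 + 1 from rfl, yCoord_cons, y0_22] at this
      simp [stepDy] at this
  | Step.E :: t, h => by
      have hne : t ≠ [] := by
        rintro rfl
        rcases h.2.2.2 with h' | h' <;> simp at h'
      exact Gr2.consE (vp'_gr2 t (vp'_tail_E h hne)) hne
  | [Step.NE], h => by
      exfalso
      have h3 := h.2.2.1
      rw [show ([Step.NE]).length = 1 from rfl, show (1:ℕ) = 0 + 1 from rfl,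
        yCoord_cons, y0_22] at h3
      simp [stepDy] at h3
  | Step.NE :: s2 :: u, h => by
      have y1 : yCoord 2 2 (Step.NE :: s2 :: u) 1 = 1 := by
        rw [show (1:ℕ) = 0 + 1 from rfl, yCoord_cons, y0_22]; simp [stepDy]
      have h2' : yCoord 2 2 (Step.NE :: s2 :: u) 2 = 1 + stepDy s2 := by
        rw [show (2:ℕ) = 1 + 1 from rfl, yCoord_cons]
        rw [show (1:ℕ) = 0 + 1 from rfl, yCoord_cons, y0_22]
        simp [stepDy]
      have hs2 : s2 = Step.SE := by
        cases s2 with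
        | SE => rfl
        | NE =>
            exfalso
            have := (h.1 2 (by simp)).2
            rw [h2'] at this; simp [stepDy] at this
        | N =>
            exfalso
            have := (h.1 2 (by simp)).2
            rw [h2'] at this; simp [stepDy] at this
        | E =>
            exfalso
            have := h.2.1 1 (by simp) (by simp)
            rw [y1] at this; norm_num at this
      subst hs2
      exact Gr2.consNESE (vp'_gr2 u (vp'_tail2 (show stepDy Step.NE = 1 from rfl) h))
  | [Step.N], h => by
      exfalso
      have h3 := h.2.2.1
      rw [show ([Step.N]).length = 1 from rfl, show (1:ℕ) = 0 + 1 from rfl,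
        yCoord_cons, y0_22] at h3
      simp [stepDy] at h3
  | Step.N :: s2 :: u, h => by
      have y1 : yCoord 2 2 (Step.N :: s2 :: u) 1 = 1 := by
        rw [show (1:ℕ) = 0 + 1 from rfl, yCoord_cons, y0_22]; simp [stepDy]
      have h2' : yCoord 2 2 (Step.N :: s2 :: u) 2 = 1 + stepDy s2 := by
        rw [show (2:ℕ) = 1 + 1 from rfl, yCoord_cons]
        rw [show (1:ℕ) = 0 + 1 from rfl, yCoord_cons, y0_22]
        simp [stepDy]
      have hs2 : s2 = Step.SE := by
        cases s2 with
        | SE => rfl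
        | NE =>
            exfalso
            have := (h.1 2 (by simp)).2
            rw [h2'] at this; simp [stepDy] at this
        | N =>
            exfalso
            have := (h.1 2 (by simp)).2
            rw [h2'] at this; simp [stepDy] at this
        | E =>
            exfalso
            have := h.2.1 1 (by simp) (by simp)
            rw [y1] at this; norm_num at this
      subst hs2
      exact Gr2.consNSE (vp'_gr2 u (vp'_tail2 (show stepDy Step.N = 1 from rfl) h))

end RRG
namespace RRG

lemma valid_iff (l : List Step) :
    ValidPath 2 2 l ↔ Gr2 l ∧ l.getD 0 Step.E ≠ Step.N := by
  constructor
  · intro h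
    obtain ⟨h1, h2, h3, h4, h5⟩ := h
    have hvp : VP' l := ⟨h1, h2, h3, h4⟩
    have hg : Gr2 l := vp'_gr2 l hvp
    refine ⟨hg, ?_⟩
    intro hN
    have hne : l ≠ [] := by rintro rfl; simp at hN
    match l, hg, hN with
    | Step.N :: Step.SE :: u, _, hN =>
        have := h5 1 (isPeakB_one_N u)
          (by intro i hi; interval_cases i; exact isPeakB_zero _) (by simp)
        rcases this with h' | ⟨_, h'⟩ <;> simp at h'
  · rintro ⟨hg, hh⟩
    obtain ⟨h1, h2, h3, h4⟩ := gr2_vp' hg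
    refine ⟨h1, h2, h3, h4, ?_⟩
    intro j hp _ _
    cases hg with
    | nil => simp [isPeakB] at hp
    | consE _ _ => right; exact ⟨rfl, rfl⟩
    | consNESE _ => left; rfl
    | consNSE _ => exact absurd rfl hh

end RRG
namespace RRG

lemma gr2_replicate (d : ℕ) {l : List Step} (h : Gr2 l) (hne : l ≠ []) :
    Gr2 (List.replicate d Step.E ++ l) := by
  induction d with
  | zero => simpa
  | succ d ih =>
      rw [List.replicate_succ, List.cons_append]
      exact Gr2.consE ih (by simp [hne])

lemma gr2_g (m : List (ℕ × Bool)) : ∀ cur, Gr2 (g cur m) := by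
  induction m with
  | nil => intro cur; exact Gr2.nil
  | cons p rest ih =>
      intro cur
      obtain ⟨q, b⟩ := p
      cases b with
      | true => exact gr2_replicate _ (Gr2.consNSE (ih (q+1))) (by simp)
      | false => exact gr2_replicate _ (Gr2.consNESE (ih (q+1))) (by simp)

lemma head_g (m : List (ℕ × Bool)) (h : SpecAt 0 m) :
    (g 0 m).getD 0 Step.E ≠ Step.N := by
  cases m with
  | nil => simp [g]
  | cons p rest =>
      obtain ⟨q, b⟩ := p
      obtain ⟨h1, _⟩ := h
      cases b with
      | true =>
          have h1' : max 0 1 ≤ q := by simpa using h1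
          have : 1 ≤ q := le_trans (le_max_right _ _) h1' 
          show (List.replicate (q - 0) Step.E ++ _).getD 0 Step.E ≠ Step.N
          have hq : q - 0 = (q - 1) + 1 := by omega
          rw [hq, List.replicate_succ, List.cons_append]
          simp
      | false =>
          show (List.replicate (q - 1 - 0) Step.E ++ _).getD 0 Step.E ≠ Step.N
          cases hq : q - 1 - 0 with
          | zero => simp
          | succ d => rw [List.replicate_succ, List.cons_append]; simp

lemma specAt_mono {m : List (ℕ × Bool)} {c : ℕ} (h : SpecAt (c+1) m) : SpecAt c m := by
  cases m with
  | nil => trivial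
  | cons p rest =>
      obtain ⟨h1, h2⟩ := h
      refine ⟨?_, h2⟩
      cases hb : p.2 <;> simp [hb] at h1 ⊢ <;> omega

lemma g_cons_shift {c : ℕ} (p : ℕ × Bool) (rest : List (ℕ × Bool))
    (h : SpecAt (c+1) (p :: rest)) :
    g c (p :: rest) = Step.E :: g (c+1) (p :: rest) := by
  obtain ⟨q, b⟩ := p
  obtain ⟨h1, _⟩ := h
  cases b with
  | true =>
      have h1' : max (c+1) 1 ≤ q := by simpa using h1
      have : c + 1 ≤ q := le_trans (le_max_left _ _) h1' 
      show List.replicate (q - c) Step.E ++ _ = Step.E :: (List.replicate (q - (c+1)) Step.E ++ _)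
      rw [show q - c = (q - (c+1)) + 1 by omega, List.replicate_succ, List.cons_append]
  | false =>
      have h1' : c + 1 + 1 ≤ q := by simpa using h1
      show List.replicate (q - 1 - c) Step.E ++ _ =
        Step.E :: (List.replicate (q - 1 - (c+1)) Step.E ++ _)
      rw [show q - 1 - c = (q - 1 - (c+1)) + 1 by omega, List.replicate_succ, List.cons_append]

lemma exists_m {l : List Step} (h : Gr2 l) :
    ∀ cur, (l.getD 0 Step.E = Step.N → 1 ≤ cur) → ∃ m, SpecAt cur m ∧ g cur m = l := by
  induction h with
  | nil => intro cur _; exact ⟨[], trivial, rfl⟩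
  | @consE t ht hne ih =>
      intro cur _
      obtain ⟨m, hm, hgm⟩ := ih (cur + 1) (by intro _; omega)
      cases m with
      | nil => exact absurd hgm.symm hne
      | cons p rest =>
          exact ⟨p :: rest, specAt_mono hm, by rw [g_cons_shift p rest hm, hgm]⟩
  | @consNESE t ht ih =>
      intro cur _
      obtain ⟨m, hm, hgm⟩ := ih (cur + 2) (by intro _; omega)
      refine ⟨(cur + 1, false) :: m, ⟨by simp, ?_⟩, ?_⟩
      · simpa using hm
      · show List.replicate (cur + 1 - 1 - cur) Step.E ++ Step.NE :: Step.SE :: g (cur+1+1) m = _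
        rw [show cur + 1 - 1 - cur = 0 by omega]
        simp only [List.replicate_zero, List.nil_append]
        rw [show cur + 1 + 1 = cur + 2 by omega, hgm]
  | @consNSE t ht ih =>
      intro cur hcur
      have h1 : 1 ≤ cur := hcur (by simp)
      obtain ⟨m, hm, hgm⟩ := ih (cur + 1) (by intro _; omega)
      refine ⟨(cur, true) :: m, ⟨by simp; omega, hm⟩, ?_⟩
      · show List.replicate (cur - cur) Step.E ++ Step.N :: Step.SE :: g (cur+1) m = _
        rw [Nat.sub_self]
        simp only [List.replicate_zero, List.nil_append]
        rw [hgm]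

end RRG
namespace RRG

def Rdec (p q : ℕ × Bool) : Prop :=
  (p.2 = true → q.1 + 1 ≤ p.1) ∧ (p.2 = false → q.1 + 2 ≤ p.1)

lemma filter_le_one {l : List (ℕ × Bool)}
    (hp : l.Pairwise (fun p q => q.1 < p.1)) (f : ℕ × Bool → Bool) (m : ℕ)
    (hf : ∀ p, f p = true → p.1 = m) : (l.filter f).length ≤ 1 := by
  have hpf := hp.filter f
  match hl : l.filter f with
  | [] => simp
  | [_] => simp
  | a :: b :: t =>
      exfalso
      rw [hl] at hpf
      have rab : b.1 < a.1 := (List.pairwise_cons.1 hpf).1 b (by simp)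
      have ha : f a = true := (List.mem_filter.1 (by rw [hl]; simp : a ∈ l.filter f)).2
      have hb : f b = true := (List.mem_filter.1 (by rw [hl]; simp : b ∈ l.filter f)).2
      rw [hf a ha, hf b hb] at rab
      omega

lemma barB_char (l : List (ℕ × Bool)) :
    BarBCond 2 2 l ↔ List.IsChain Rdec l ∧ ∀ p ∈ l, 0 < p.1 := by
  constructor
  · rintro ⟨⟨_, hpos, _⟩, _, hchain⟩
    refine ⟨?_, hpos⟩
    rw [List.isChain_iff_getElem]
    intro i hi
    have h2 : i + (2 - 1) < l.length := by omega
    have := hchain i h2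
    rw [List.getD_eq_getElem (l := l) (d := (0, false)) (by omega), List.getD_eq_getElem (l := l) (d := (0, false)) (by omega)] at this
    exact this
  · rintro ⟨hchain, hpos⟩
    have hstrict : l.Pairwise (fun p q => q.1 < p.1) := by
      haveI : IsTrans (ℕ × Bool) (fun p q => q.1 < p.1) := ⟨fun _ _ _ h1 h2 => lt_trans h2 h1⟩
      rw [← List.isChain_iff_pairwise]
      refine hchain.imp ?_
      intro a b hab
      obtain ⟨hab1, hab2⟩ := hab
      cases hb : a.2
      · have := hab2 hb; omega
      · have := hab1 hb; omega
    refine ⟨⟨?_, hpos, ?_⟩, ?_, ?_⟩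
    · exact hstrict.imp (fun h => le_of_lt h)
    · intro m
      exact filter_le_one hstrict _ m (fun p hp => by
        simp only [Bool.and_eq_true, decide_eq_true_eq] at hp; exact hp.1)
    · exact filter_le_one hstrict _ 1 (fun p hp => by
        simp only [Bool.and_eq_true, decide_eq_true_eq] at hp; exact hp.1)
    · intro j hj
      have hj' : j + 1 < l.length := by omega
      rw [List.isChain_iff_getElem] at hchain
      have := hchain j (by omega)
      rw [List.getD_eq_getElem (l := l) (d := (0, false)) (by omega), List.getD_eq_getElem (l := l) (d := (0, false)) (by omega)]
      exact this

lemma specAt_char : ∀ (m : List (ℕ × Bool)) (cur : ℕ),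
    SpecAt cur m ↔ (List.IsChain (flip Rdec) m ∧ (∀ p ∈ m, 0 < p.1) ∧
      ∀ p ∈ m.head?, (if p.2 then cur ≤ p.1 else cur + 1 ≤ p.1)) := by
  intro m
  induction m with
  | nil => intro cur; simp [SpecAt]
  | cons p rest ih =>
      intro cur
      show (if p.2 then max cur 1 ≤ p.1 else cur + 1 ≤ p.1) ∧ SpecAt (p.1 + 1) rest ↔ _
      rw [ih (p.1 + 1), List.isChain_cons]
      constructor
      · rintro ⟨hb, hc, hpos, hh⟩
        have hp0 : 0 < p.1 := by cases h2 : p.2 <;> simp [h2] at hb <;> omega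
        refine ⟨⟨?_, hc⟩, ?_, ?_⟩
        · intro y hy
          have := hh y hy
          constructor <;> intro h2 <;> simp [h2] at this <;> omega
        · intro q hq
          rcases List.mem_cons.1 hq with rfl | hq
          · exact hp0
          · exact hpos q hq
        · intro q hq
          simp only [List.head?_cons, Option.mem_def, Option.some.injEq] at hq
          subst hq
          cases h2 : p.2 <;> simp [h2] at hb ⊢ <;> omega
      · rintro ⟨⟨hh, hc⟩, hpos, hb⟩
        have hbp := hb p (by simp)
        have hp0 : 0 < p.1 := hpos p (by simp)
        refine ⟨?_, hc, ?_, ?_⟩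
        · cases h2 : p.2 <;> simp [h2] at hbp ⊢ <;> omega
        · intro q hq; exact hpos q (by simp [hq])
        · intro q hq
          obtain ⟨hr1, hr2⟩ := hh q hq
          cases hq2 : q.2
          · have := hr2 hq2
            simp only [hq2, Bool.false_eq_true, if_false]
            omega
          · have := hr1 hq2
            simp only [hq2, if_true]
            omega

lemma barB_iff_specAt (l : List (ℕ × Bool)) :
    BarBCond 2 2 l ↔ SpecAt 0 l.reverse := by
  rw [barB_char, specAt_char]
  constructor
  · rintro ⟨hc, hpos⟩
    refine ⟨?_, ?_, ?_⟩
    · rw [List.isChain_reverse]; exact hc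
    · intro p hp; exact hpos p (by simpa using hp)
    · intro p hp
      have : 0 < p.1 := hpos p (by
        have := List.mem_of_mem_head? hp; simpa using this)
      cases h2 : p.2 <;> simp [h2] <;> omega
  · rintro ⟨hc, hpos, _⟩
    refine ⟨?_, ?_⟩
    · rw [List.isChain_reverse] at hc; exact hc
    · intro p hp; exact hpos p (by simpa using hp)

end RRG
namespace RRG

lemma partSum_reverse (l : List (ℕ × Bool)) : partSum l.reverse = opSum l := by
  simp [partSum, opSum, List.sum_reverse]

lemma card_path_eq (n : ℕ) :
    Nat.card {l : List Step // ValidPath 2 2 l ∧ majorIndex l = n} =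
      Nat.card {m : List (ℕ × Bool) // SpecAt 0 m ∧ partSum m = n} := by
  symm
  apply Nat.card_eq_of_bijective
    (fun x : {m : List (ℕ × Bool) // SpecAt 0 m ∧ partSum m = n} =>
      (⟨g 0 x.1, (valid_iff _).2 ⟨gr2_g _ 0, head_g _ x.2.1⟩,
        by rw [← maj_zero_eq, maj_g _ 0 x.2.1, x.2.2]⟩ :
        {l : List Step // ValidPath 2 2 l ∧ majorIndex l = n}))
  constructor
  · intro x y hxy
    have hg : g 0 x.1 = g 0 y.1 := congrArg Subtype.val hxy
    have : dec (g 0 x.1) 0 = dec (g 0 y.1) 0 := by rw [hg]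
    rw [dec_g x.1 0 x.2.1, dec_g y.1 0 y.2.1] at this
    exact Subtype.ext this
  · rintro ⟨l, hv, hm⟩
    obtain ⟨hg, hh⟩ := (valid_iff l).1 hv
    obtain ⟨m, hs, hgm⟩ := exists_m hg 0 (fun h => absurd h hh)
    refine ⟨⟨m, hs, ?_⟩, ?_⟩
    · rw [← maj_g m 0 hs, hgm, maj_zero_eq, hm]
    · exact Subtype.ext hgm

lemma card_op_eq (n : ℕ) :
    Nat.card {m : List (ℕ × Bool) // SpecAt 0 m ∧ partSum m = n} =
      Nat.card {l : List (ℕ × Bool) // BarBCond 2 2 l ∧ opSum l = n} := by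
  symm
  apply Nat.card_eq_of_bijective
    (fun x : {l : List (ℕ × Bool) // BarBCond 2 2 l ∧ opSum l = n} =>
      (⟨x.1.reverse, (barB_iff_specAt x.1).1 x.2.1,
        by rw [partSum_reverse, x.2.2]⟩ :
        {m : List (ℕ × Bool) // SpecAt 0 m ∧ partSum m = n}))
  constructor
  · intro x y hxy
    have : x.1.reverse = y.1.reverse := congrArg Subtype.val hxy
    exact Subtype.ext (List.reverse_injective this)
  · rintro ⟨m, hs, hp⟩
    refine ⟨⟨m.reverse, ?_, ?_⟩, ?_⟩
    · rw [barB_iff_specAt, List.reverse_reverse]; exact hs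
    · rw [← partSum_reverse, List.reverse_reverse]; exact hp
    · exact Subtype.ext (List.reverse_reverse m)

end RRG
/-- Theorem 1.3 specialized to k = a = 2: the number of lattice paths from (0,0) to the
x-axis of height < 2 with major index n equals the number of overpartitions of n with
λ_j − λ_{j+1} ≥ 1 if λ_j is overlined and ≥ 2 otherwise, and 1 occurring non-overlined
at most once. -/
theorem Ebar_eq_BarB_two_two (n : ℕ) :
    Nat.card {l : List Step // ValidPath 2 2 l ∧ majorIndex l = n} =
      Nat.card {l : List (ℕ × Bool) // BarBCond 2 2 l ∧ opSum l = n} := by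
  rw [RRG.card_path_eq n, RRG.card_op_eq n]
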